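/- Fix a loopless matroid M of positive rank and define Eu_N = χ_N(2) and c_N = −2^{rk N} χ_N(1/2) for all minors N. Then for every nonempty flat G of M, Σ_{F : ∅ ≤ F ≤ G} c_{M^F} · Eu_{(M^G)_F} = 0, where (M^G)_F denotes the contraction of the restriction M^G by the flat F. -/

import Mathlib

open scoped Matroid

variable {α : Type*}

/-- The rank of a set in a matroid: the maximum size of an independent subset of the set. -/
noncomputable def Matroid.rkSet (M : Matroid α) (S : Set α) : ℕ :=
  ⨆ I : {I : Set α // M.Indep I ∧ I ⊆ S}, I.1.ncard

/-- The rank of a matroid: the rank of its ground set. -/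
noncomputable def Matroid.rank (M : Matroid α) : ℕ := M.rkSet M.E

/-- Deletion of a set from a matroid. -/
noncomputable def Matroid.del (M : Matroid α) (D : Set α) : Matroid α := M ↾ (M.E \ D)

/-- Contraction of a matroid by a set, defined via duality: `M / C = (M✶ \ C)✶`. -/
noncomputable def Matroid.con (M : Matroid α) (C : Set α) : Matroid α := (M✶.del C)✶

/-- A matroid is loopless if every singleton of the ground set is independent. -/
def Matroid.IsLoopless (M : Matroid α) : Prop := ∀ e ∈ M.E, M.Indep {e}

/-- A matroid is simple if every (at most two-element) subset `{e, f}` of the ground set is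
independent. -/
def Matroid.IsSimple (M : Matroid α) : Prop := ∀ e ∈ M.E, ∀ f ∈ M.E, M.Indep {e, f}

/-- The characteristic polynomial of a matroid, as a function of `t`, given by the
Whitney rank-generating-function formula `χ_M(t) = ∑_{S ⊆ E} (-1)^|S| t^(rk M - rk S)`
(which agrees with the Möbius-function definition for loopless matroids). -/
noncomputable def Matroid.charPoly (M : Matroid α) (t : ℚ) : ℚ :=
  ∑ᶠ (S : Set α) (_ : S ⊆ M.E), (-1 : ℚ) ^ S.ncard * t ^ (M.rank - M.rkSet S)

/-- The beta invariant of a matroid, via Crapo's formula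
`β(M) = (-1)^(rk M) ∑_{S ⊆ E} (-1)^|S| rk S`. -/
noncomputable def Matroid.betaInv (M : Matroid α) : ℚ :=
  (-1 : ℚ) ^ M.rank * ∑ᶠ (S : Set α) (_ : S ⊆ M.E), (-1 : ℚ) ^ S.ncard * (M.rkSet S : ℚ)

/-- The invariant `c_M = -2^(rk M) · χ_M(1/2)`. -/
noncomputable def Matroid.cInv (M : Matroid α) : ℚ :=
  - 2 ^ M.rank * M.charPoly (1/2)


/-!
By Whitney's formula, `c_{M|F} = -∑_{A ⊆ F} (-1)^|A| 2^{r A}` and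
`Eu_{(M|G)/F} = ∑_{F ⊆ T ⊆ G} (-1)^{|T \ F|} 2^{r G - r T}`. For a function `ψ` of subsets of `G`
that depends only on the closure, the alternating upper sum `∑_{S ⊆ T ⊆ G} (-1)^{|T \ S|} ψ T`
vanishes unless `S` is a flat: toggling a fixed element of `cl S \ S` is a sign-reversing
involution. Hence the sum of these upper sums over the flats `F ⊇ A` is their sum over all
`S ⊇ A`, which is `ψ A` by Möbius inversion on the Boolean lattice. The whole sum collapses to
`-∑_{A ⊆ G} (-1)^|A| 2^{r A} 2^{r G - r A} = -2^{r G} ∑_{A ⊆ G} (-1)^|A|`, which vanishes as `G`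
is nonempty.
-/

open Finset

lemma finsum_subset_coe_eq_sum {β : Type*} [AddCommMonoid β] (s : Finset α) (f : Set α → β) :
    ∑ᶠ (S : Set α) (_ : S ⊆ ↑s), f S = ∑ t ∈ s.powerset, f ↑t := by
  have himage : 𝒫 (s : Set α) = (↑) '' (s.powerset : Set (Finset α)) := by
    ext S
    refine ⟨fun hS => ⟨(s.finite_toSet.subset hS).toFinset, by simpa using hS, by simp⟩, ?_⟩
    rintro ⟨t, ht, rfl⟩
    simpa using ht
  change ∑ᶠ S ∈ 𝒫 (s : Set α), f S = _
  rw [himage, finsum_mem_image coe_injective.injOn, finsum_mem_coe_finset]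

lemma finsum_and_subset_coe_eq_sum {β : Type*} [AddCommMonoid β] (s : Finset α)
    (p : Set α → Prop) [DecidablePred p] (f : Set α → β) :
    ∑ᶠ (S : Set α) (_ : p S ∧ S ⊆ ↑s), f S
      = ∑ t ∈ s.powerset with p ((t : Finset α) : Set α), f ↑t := by
  rw [sum_filter, ← finsum_subset_coe_eq_sum s fun S => if p S then f S else 0]
  refine finsum_congr fun S => ?_
  classical
  simp only [finsum_eq_if]
  split_ifs <;> tauto

namespace Matroid

variable {M : Matroid α} {I R X Y : Set α}

lemma con_eq_contract (M : Matroid α) (C : Set α) : M.con C = M ／ C := rfl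

lemma eRk_contract_add_eRk (M : Matroid α) (C X : Set α) :
    (M ／ C).eRk X + M.eRk C = M.eRk (X ∪ C) := by
  obtain ⟨I, hI⟩ := M.exists_isBasis' C
  obtain ⟨K, hK, hIK⟩ :=
    hI.indep.subset_isBasis'_of_subset (hI.subset.trans (Set.subset_union_right (s := X)))
  have hKC : K ∩ C = I := (hI.eq_of_subset_indep (hK.indep.inter_right C)
    (Set.subset_inter hIK hI.subset) Set.inter_subset_right).symm
  have hcon : (M ／ C).IsBasis' (K \ C) (X \ C) := by
    simpa using hK.contract_isBasis' hI
      (hK.indep.subset (Set.union_subset Set.sdiff_subset hIK))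
  have hXC : (M ／ C).eRk X = (M ／ C).eRk (X \ C) := by
    rw [← eRk_inter_ground, ← eRk_inter_ground _ (X \ C), contract_ground]
    congr 1
    tauto_set
  rw [hXC, ← hcon.encard_eq_eRk, ← hI.encard_eq_eRk, ← hK.encard_eq_eRk, ← hKC,
    Set.encard_sdiff_add_encard_inter]

lemma IsBasis'.rkSet_eq (hI : M.IsBasis' I X) (hIfin : I.Finite) : M.rkSet X = I.ncard := by
  have hle : ∀ J : {J : Set α // M.Indep J ∧ J ⊆ X}, J.1.ncard ≤ I.ncard := fun J => by
    rw [Set.ncard_def, Set.ncard_def]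
    exact ENat.toNat_le_toNat ((J.2.1.encard_le_eRk_of_subset J.2.2).trans_eq
      hI.encard_eq_eRk.symm) hIfin.encard_lt_top.ne
  exact (ciSup_le' hle).antisymm
    (le_ciSup (f := fun J : {J : Set α // M.Indep J ∧ J ⊆ X} => J.1.ncard)
      ⟨_, Set.forall_mem_range.2 hle⟩ ⟨I, hI.indep, hI.subset⟩)

lemma cast_rkSet (M : Matroid α) [M.RankFinite] (X : Set α) : (M.rkSet X : ℕ∞) = M.eRk X := by
  obtain ⟨I, hI⟩ := M.exists_isBasis' X
  rw [hI.rkSet_eq hI.indep.finite, hI.indep.finite.cast_ncard_eq, hI.encard_eq_eRk]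

lemma charPoly_eq_sum {E : Finset α} (hE : M.E = ↑E) (t : ℚ) :
    M.charPoly t = ∑ A ∈ E.powerset, (-1) ^ #A * t ^ (M.rank - M.rkSet ↑A) := by
  simp only [charPoly, hE, finsum_subset_coe_eq_sum, Set.ncard_coe_finset]

variable [M.RankFinite]

lemma rkSet_closure (X : Set α) : M.rkSet (M.closure X) = M.rkSet X := by
  exact_mod_cast (M.cast_rkSet _).trans ((M.eRk_closure_eq X).trans (M.cast_rkSet X).symm)

lemma rkSet_mono (hXY : X ⊆ Y) : M.rkSet X ≤ M.rkSet Y := by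
  exact_mod_cast (M.cast_rkSet X).trans_le ((M.eRk_mono hXY).trans_eq (M.cast_rkSet Y).symm)

lemma rkSet_restrict (hXR : X ⊆ R) : (M ↾ R).rkSet X = M.rkSet X := by
  exact_mod_cast ((M ↾ R).cast_rkSet X).trans
    ((M.restrict_eRk_eq hXR).trans (M.cast_rkSet X).symm)

lemma rank_restrict (R : Set α) : (M ↾ R).rank = M.rkSet R :=
  rkSet_restrict subset_rfl

lemma rkSet_contract_add (C X : Set α) : (M ／ C).rkSet X + M.rkSet C = M.rkSet (X ∪ C) := by
  have h := M.eRk_contract_add_eRk C X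
  rw [← cast_rkSet, ← cast_rkSet, ← cast_rkSet] at h
  exact_mod_cast h

lemma cInv_restrict (F : Finset α) :
    (M ↾ ↑F).cInv = -∑ A ∈ F.powerset, (-1) ^ #A * 2 ^ M.rkSet ↑A := by
  rw [cInv, charPoly_eq_sum (restrict_ground_eq ..), neg_mul, mul_sum, rank_restrict]
  refine congrArg _ (sum_congr rfl fun A hA => ?_)
  have hAF : (A : Set α) ⊆ ↑F := coe_subset.2 (mem_powerset.1 hA)
  rw [rkSet_restrict hAF, mul_left_comm, one_div, inv_pow,
    ← pow_mul_pow_sub 2 (rkSet_mono hAF), mul_assoc, mul_inv_cancel₀ (by positivity), mul_one]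

end Matroid

section AlternatingSums

variable [DecidableEq α] {R : Type*} [Ring R]

namespace Finset

lemma sum_powerset_neg_one_pow_card_eq_ite (x : Finset α) :
    ∑ B ∈ x.powerset, (-1 : R) ^ #B = if x = ∅ then 1 else 0 := by
  have h := congrArg (Int.cast : ℤ → R) (sum_powerset_neg_one_pow_card (x := x))
  push_cast at h
  rw [h]

lemma sum_Icc_neg_one_pow_card_sdiff {A T : Finset α} (hAT : A ⊆ T) :
    ∑ S ∈ Icc A T, (-1 : R) ^ #(T \ S) = if A = T then 1 else 0 := by
  calc ∑ S ∈ Icc A T, (-1 : R) ^ #(T \ S) = ∑ B ∈ (T \ A).powerset, (-1 : R) ^ #B := by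
        refine sum_nbij' (T \ ·) (T \ ·) (fun S hS => ?_) (fun B hB => ?_) (fun S hS => ?_)
          (fun B hB => ?_) fun _ _ => rfl
        all_goals simp only [mem_Icc, mem_powerset] at *
        · exact sdiff_subset_sdiff subset_rfl hS.1
        · exact ⟨subset_sdiff.2 ⟨hAT, (disjoint_of_subset_left hB sdiff_disjoint).symm⟩,
            sdiff_subset⟩
        · exact sdiff_sdiff_eq_self hS.2
        · exact sdiff_sdiff_eq_self (hB.trans sdiff_subset)
    _ = if A = T then 1 else 0 := by
        rw [sum_powerset_neg_one_pow_card_eq_ite]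
        exact if_congr (sdiff_eq_empty_iff_subset.trans ⟨hAT.antisymm, fun h => h.ge⟩) rfl rfl

def upperAltSum (G : Finset α) (ψ : Finset α → R) (S : Finset α) : R :=
  ∑ B ∈ (G \ S).powerset, (-1) ^ #B * ψ (S ∪ B)

variable {G S A : Finset α} {ψ : Finset α → R}

lemma upperAltSum_eq_sum_Icc (hSG : S ⊆ G) :
    upperAltSum G ψ S = ∑ T ∈ Icc S G, (-1) ^ #(T \ S) * ψ T := by
  have hdisj : ∀ B ∈ (G \ S).powerset, Disjoint S B := fun B hB =>
    disjoint_of_subset_right (mem_powerset.1 hB) disjoint_sdiff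
  rw [Icc_eq_image_powerset hSG, sum_image, upperAltSum]
  · exact sum_congr rfl fun B hB => by rw [union_sdiff_cancel_left (hdisj B hB)]
  · intro B₁ hB₁ B₂ hB₂ h
    rw [← union_sdiff_cancel_left (hdisj B₁ hB₁), ← union_sdiff_cancel_left (hdisj B₂ hB₂)]
    exact congrArg (· \ S) h

lemma sum_Icc_upperAltSum (hAG : A ⊆ G) : ∑ S ∈ Icc A G, upperAltSum G ψ S = ψ A := by
  calc ∑ S ∈ Icc A G, upperAltSum G ψ S
      = ∑ S ∈ Icc A G, ∑ T ∈ Icc S G, (-1) ^ #(T \ S) * ψ T :=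
        sum_congr rfl fun S hS => upperAltSum_eq_sum_Icc (mem_Icc.1 hS).2
    _ = ∑ T ∈ Icc A G, (∑ S ∈ Icc A T, (-1) ^ #(T \ S)) * ψ T := by
        simp_rw [sum_mul]
        refine sum_comm' fun S T => ?_
        simp only [mem_Icc]
        constructor
        · rintro ⟨⟨hAS, -⟩, hST, hTG⟩; exact ⟨⟨hAS, hST⟩, hAS.trans hST, hTG⟩
        · rintro ⟨⟨hAS, hST⟩, -, hTG⟩; exact ⟨⟨hAS, hST.trans hTG⟩, hST, hTG⟩
    _ = ψ A := by
        rw [sum_congr rfl fun T hT => by rw [sum_Icc_neg_one_pow_card_sdiff (mem_Icc.1 hT).1,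
          ite_mul, one_mul, zero_mul], sum_ite_eq, if_pos (mem_Icc.2 ⟨subset_rfl, hAG⟩)]

lemma upperAltSum_eq_zero {e : α} (he : e ∈ G \ S)
    (hψ : ∀ T, S ⊆ T → ψ (insert e T) = ψ T) : upperAltSum G ψ S = 0 := by
  rw [upperAltSum, ← insert_erase he, sum_powerset_insert (notMem_erase e _), ← sum_add_distrib]
  refine sum_eq_zero fun B hB => ?_
  have heB : e ∉ B := fun h => notMem_erase e _ (mem_powerset.1 hB h)
  rw [card_insert_of_notMem heB, union_insert, hψ _ subset_union_left, pow_succ, mul_neg_one,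
    neg_mul, add_neg_cancel]

end Finset

namespace Matroid

variable {M : Matroid α} {G S : Finset α} {ψ : Finset α → R}

lemma upperAltSum_eq_zero_of_not_isFlat (hG : M.IsFlat ↑G)
    (hψ : ∀ X Y : Finset α, M.closure ↑X = M.closure ↑Y → ψ X = ψ Y) (hSG : S ⊆ G)
    (hS : ¬ M.IsFlat ↑S) : upperAltSum G ψ S = 0 := by
  have hclG : M.closure ↑S ⊆ ↑G := by
    simpa [hG.closure] using M.closure_subset_closure (coe_subset.2 hSG)
  obtain ⟨e, heS, he⟩ : ∃ e ∈ M.closure ↑S, e ∉ S := by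
    by_contra! h
    exact hS (isFlat_iff_closure_eq.2 (Set.Subset.antisymm h
      (M.subset_closure _ ((coe_subset.2 hSG).trans hG.subset_ground))))
  refine upperAltSum_eq_zero (mem_sdiff.2 ⟨hclG heS, he⟩) fun T hST => hψ _ _ ?_
  rw [coe_insert, closure_insert_eq_of_mem_closure
    (M.closure_subset_closure (coe_subset.2 hST) heS)]

open scoped Classical in
theorem sum_isFlat_mul_upperAltSum (hG : M.IsFlat ↑G) (φ : Finset α → R)
    (hψ : ∀ X Y : Finset α, M.closure ↑X = M.closure ↑Y → ψ X = ψ Y) :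
    ∑ F ∈ G.powerset with M.IsFlat ((F : Finset α) : Set α),
        (∑ A ∈ F.powerset, (-1) ^ #A * φ A) * upperAltSum G ψ F
      = ∑ A ∈ G.powerset, (-1) ^ #A * φ A * ψ A := by
  calc _ = ∑ F ∈ G.powerset with M.IsFlat ((F : Finset α) : Set α), ∑ A ∈ F.powerset,
          (-1) ^ #A * φ A * upperAltSum G ψ F := by simp_rw [sum_mul]
    _ = ∑ A ∈ G.powerset, ∑ F ∈ Icc A G with M.IsFlat ((F : Finset α) : Set α),
          (-1) ^ #A * φ A * upperAltSum G ψ F := by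
        refine sum_comm' fun F A => ?_
        simp only [mem_filter, mem_powerset, mem_Icc]
        constructor
        · rintro ⟨⟨hFG, hF⟩, hAF⟩; exact ⟨⟨⟨hAF, hFG⟩, hF⟩, hAF.trans hFG⟩
        · rintro ⟨⟨⟨hAF, hFG⟩, hF⟩, -⟩; exact ⟨⟨hFG, hF⟩, hAF⟩
    _ = ∑ A ∈ G.powerset, (-1) ^ #A * φ A * ∑ F ∈ Icc A G, upperAltSum G ψ F := by
        refine sum_congr rfl fun A _ => ?_
        rw [mul_sum, sum_filter_of_ne fun F hF h => ?_]
        by_contra hF'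
        exact h (by rw [upperAltSum_eq_zero_of_not_isFlat hG hψ (mem_Icc.1 hF).2 hF', mul_zero])
    _ = _ := sum_congr rfl fun A hA => by rw [sum_Icc_upperAltSum (mem_powerset.1 hA)]

lemma charPoly_restrict_contract [M.RankFinite] {F G : Finset α} (hFG : F ⊆ G) (t : ℚ) :
    ((M ↾ ↑G).con ↑F).charPoly t
      = upperAltSum G (fun T => t ^ (M.rkSet ↑G - M.rkSet ↑T)) F := by
  have hF : (F : Set α) ⊆ ↑G := coe_subset.2 hFG
  have hrk : ∀ X ⊆ (G : Set α), ((M ↾ ↑G) ／ ↑F).rkSet X + M.rkSet ↑F = M.rkSet (X ∪ ↑F) :=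
    fun X hX => by
      rw [← rkSet_restrict hF, ← rkSet_restrict (Set.union_subset hX hF)]
      exact rkSet_contract_add _ _
  have hrank : ((M ↾ ↑G) ／ ↑F).rank + M.rkSet ↑F = M.rkSet ↑G := by
    have h := hrk _ (Set.sdiff_subset (t := ↑F))
    rw [Set.sdiff_union_of_subset hF] at h
    rwa [rank, contract_ground, restrict_ground_eq]
  rw [con_eq_contract, charPoly_eq_sum (E := G \ F) (by simp), upperAltSum]
  refine sum_congr rfl fun B hB => ?_
  have hB := hrk _ (coe_subset.2 ((mem_powerset.1 hB).trans sdiff_subset))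
  rw [coe_union, Set.union_comm]
  congr 2
  omega

end Matroid

end AlternatingSums

theorem c_eu_orthogonality_general (M : Matroid α) (hfin : M.E.Finite)
    (G : Set α) (hG : M.IsFlat G) (hGne : G.Nonempty) :
    ∑ᶠ (F : Set α) (_ : M.IsFlat F ∧ F ⊆ G),
      (M ↾ F).cInv * ((M ↾ G).con F).charPoly 2 = 0 := by
  classical
  have : M.Finite := ⟨hfin⟩
  lift G to Finset α using hfin.subset hG.subset_ground
  have hterm : ∀ F ⊆ G,
      (M ↾ ↑F).cInv * ((M ↾ ↑G).con ↑F).charPoly 2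
        = -((∑ A ∈ F.powerset, (-1) ^ #A * 2 ^ M.rkSet ↑A)
          * upperAltSum G (fun T => 2 ^ (M.rkSet ↑G - M.rkSet ↑T)) F) := fun F hFG => by
    rw [Matroid.cInv_restrict, Matroid.charPoly_restrict_contract hFG, neg_mul]
  have hψ : ∀ X Y : Finset α, M.closure ↑X = M.closure ↑Y →
      (2 : ℚ) ^ (M.rkSet ↑G - M.rkSet ↑X) = 2 ^ (M.rkSet ↑G - M.rkSet ↑Y) := fun X Y h => by
    rw [← M.rkSet_closure ↑X, h, M.rkSet_closure]
  rw [finsum_and_subset_coe_eq_sum,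
    sum_congr rfl fun F hF => hterm F (mem_powerset.1 (mem_filter.1 hF).1), sum_neg_distrib,
    M.sum_isFlat_mul_upperAltSum hG _ hψ, neg_eq_zero]
  calc ∑ A ∈ G.powerset, (-1) ^ #A * 2 ^ M.rkSet ↑A * 2 ^ (M.rkSet ↑G - M.rkSet ↑A)
      = 2 ^ M.rkSet ↑G * ∑ A ∈ G.powerset, (-1 : ℚ) ^ #A := by
        rw [mul_sum]
        refine sum_congr rfl fun A hA => ?_
        rw [mul_assoc, pow_mul_pow_sub _ (Matroid.rkSet_mono (coe_subset.2 (mem_powerset.1 hA))),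
          mul_comm]
    _ = 0 := by
        rw [sum_powerset_neg_one_pow_card_eq_ite, if_neg (coe_nonempty.1 hGne).ne_empty,
          mul_zero]

/-- For a loopless matroid `M` of positive rank and every nonempty flat `G`,
`∑_{F flat, F ⊆ G} c_{M^F} · Eu_{(M^G)_F} = 0`, where `Eu_N = χ_N(2)` and
`c_N = -2^(rk N) χ_N(1/2)`. -/
theorem c_eu_orthogonality (M : Matroid α) (hfin : M.E.Finite) (hl : M.IsLoopless)
    (hrk : 0 < M.rank) (G : Set α) (hG : M.IsFlat G) (hGne : G.Nonempty) :
    ∑ᶠ (F : Set α) (_ : M.IsFlat F ∧ F ⊆ G),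
      (M ↾ F).cInv * ((M ↾ G).con F).charPoly 2 = 0 :=
  c_eu_orthogonality_general M hfin G hG hGne
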